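/- Let G be a topological gyrogroup. Then the connected component of the identity element is an L-subgyrogroup of G. -/

import Mathlib

open Set Topology

universe u

class Gyrogroup (G : Type u) where
  op : G → G → G
  one : G
  inv : G → G
  gyr : G → G → G ≃ G
  one_op : ∀ g, op one g = g
  op_one : ∀ g, op g one = g
  inv_op : ∀ g, op (inv g) g = one
  op_inv : ∀ g, op g (inv g) = one
  unique_one : ∀ e : G, (∀ g, op e g = g ∧ op g e = g) → e = one
  unique_inv : ∀ g h : G, (op h g = one ∧ op g h = one) → h = inv g
  gyr_op : ∀ g h f, op g (op h f) = op (op g h) (gyr g h f)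
  gyr_hom : ∀ g h a b, gyr g h (op a b) = op (gyr g h a) (gyr g h b)
  loop : ∀ g h, gyr g h = gyr (op g h) h

namespace Gyrogroup

variable {G : Type u} [Gyrogroup G]

/-- `H` is a subgyrogroup: nonempty and a gyrogroup under the restricted operations. -/
def IsSubgyrogroup (H : Set G) : Prop :=
  H.Nonempty ∧ one ∈ H ∧
  (∀ a ∈ H, ∀ b ∈ H, op a b ∈ H) ∧
  (∀ a ∈ H, inv a ∈ H) ∧
  (∀ a ∈ H, ∀ b ∈ H, Set.BijOn (gyr a b) H H)

/-- `H` is an L-subgyrogroup: `gyr g h` fixes `H` setwise for every `g ∈ G`, `h ∈ H`. -/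
def IsLSubgyrogroup (H : Set G) : Prop :=
  IsSubgyrogroup H ∧ ∀ g : G, ∀ h ∈ H, (gyr g h) '' H = H

def leftCoset (a : G) (H : Set G) : Set G := (fun h => op a h) '' H

/-- The subgyrogroup generated by `S`. -/
def generatedSubgyrogroup (S : Set G) : Set G :=
  ⋂₀ {H : Set G | IsSubgyrogroup H ∧ S ⊆ H}

/-- The gyrogroup operations are continuous (topological gyrogroup). -/
def ContinuousGyroOps (G : Type u) [Gyrogroup G] [TopologicalSpace G] : Prop :=
  Continuous (fun p : G × G => op p.1 p.2) ∧ Continuous (inv : G → G)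

/-- The topology coincides with the order topology of some linear order. -/
def TopologicallyOrderable (G : Type u) [t : TopologicalSpace G] : Prop :=
  ∃ l : LinearOrder G, t = TopologicalSpace.generateFrom
      {s : Set G | ∃ a : G, s = {x | l.lt a x} ∨ s = {x | l.lt x a}}

/-- A strongly topological gyrogroup: a topological gyrogroup with a neighborhood base
at `1` whose members are invariant under all gyroautomorphisms. -/
def StronglyTopologicalGyrogroup (G : Type u) [Gyrogroup G] [TopologicalSpace G] : Prop :=
  ContinuousGyroOps G ∧
  ∃ 𝒰 : Set (Set G), (∀ U ∈ 𝒰, U ∈ nhds (one : G)) ∧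
    (∀ V ∈ nhds (one : G), ∃ U ∈ 𝒰, U ⊆ V) ∧
    (∀ U ∈ 𝒰, ∀ x y : G, (gyr x y) '' U = U)

def StronglyTopologicallyOrderable (G : Type u) [Gyrogroup G] [TopologicalSpace G] : Prop :=
  StronglyTopologicalGyrogroup G ∧ TopologicallyOrderable G

end Gyrogroup

open Gyrogroup

/-!
Left translation by a point of the component `C` of `1`, and inversion, are continuous maps
sending `1` into `C`, so they map `C` into itself. A gyroautomorphism is a composite of left
translations, `gyr g h x = ⊖(g ⊕ h) ⊕ (g ⊕ (h ⊕ x))`, and so is its inverse; hence it is a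
homeomorphism fixing `1`, and it maps `C` onto itself.
-/

namespace Gyrogroup

variable {G : Type u} [Gyrogroup G]

theorem inv_op_op_eq_gyr (a x : G) : op (inv a) (op a x) = gyr (inv a) a x := by
  rw [gyr_op, inv_op, one_op]

theorem op_left_injective (a : G) : Function.Injective (op a) := by
  intro x y hxy
  apply (gyr (inv a) a).injective
  rw [← inv_op_op_eq_gyr, ← inv_op_op_eq_gyr, hxy]

theorem gyr_one_left (h : G) : gyr one h = Equiv.refl G := by
  ext f
  have := gyr_op (one : G) h f
  rw [one_op, one_op] at this
  exact (op_left_injective h this).symm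

theorem inv_op_cancel_left (a x : G) : op (inv a) (op a x) = x := by
  rw [inv_op_op_eq_gyr, loop, inv_op, gyr_one_left]
  rfl

theorem inv_inv_eq (a : G) : inv (inv a) = a :=
  (unique_inv (inv a) a ⟨op_inv a, inv_op a⟩).symm

theorem op_inv_cancel_left (a x : G) : op a (op (inv a) x) = x := by
  simpa only [inv_inv_eq] using inv_op_cancel_left (inv a) x

theorem inv_one_eq : inv (one : G) = one :=
  (unique_inv one one ⟨op_one one, op_one one⟩).symm

theorem gyr_apply_one (g h : G) : gyr g h one = one := by
  have hom := gyr_hom g h one one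
  rw [one_op] at hom
  simpa only [inv_op_cancel_left, inv_op] using
    congrArg (op (inv (gyr g h one))) hom.symm

theorem gyr_apply_eq (g h x : G) : gyr g h x = op (inv (op g h)) (op g (op h x)) := by
  rw [gyr_op g h x, inv_op_cancel_left]

theorem gyr_symm_apply_eq (g h x : G) :
    (gyr g h).symm x = op (inv h) (op (inv g) (op (op g h) x)) := by
  rw [Equiv.symm_apply_eq, gyr_apply_eq, op_inv_cancel_left, op_inv_cancel_left,
    inv_op_cancel_left]

theorem isLSubgyrogroup_of_gyr_image_eq {H : Set G} (one_mem : one ∈ H)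
    (op_mem : ∀ a ∈ H, ∀ b ∈ H, op a b ∈ H) (inv_mem : ∀ a ∈ H, inv a ∈ H)
    (gyr_image : ∀ g, ∀ h ∈ H, gyr g h '' H = H) : IsLSubgyrogroup H := by
  refine ⟨⟨⟨one, one_mem⟩, one_mem, op_mem, inv_mem, fun a _ b hb => ?_⟩, gyr_image⟩
  simpa only [gyr_image a b hb] using (gyr a b).injective.injOn.bijOn_image (s := H)

namespace ContinuousGyroOps

variable [TopologicalSpace G]

theorem continuous_op_left (hc : ContinuousGyroOps G) (a : G) : Continuous (op a) :=
  hc.1.comp (continuous_const.prodMk continuous_id)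

def gyrHomeomorph (hc : ContinuousGyroOps G) (g h : G) : G ≃ₜ G where
  toEquiv := gyr g h
  continuous_toFun := by
    simp only [Equiv.toFun_as_coe, funext (gyr_apply_eq g h)]
    exact (hc.continuous_op_left _).comp ((hc.continuous_op_left g).comp
      (hc.continuous_op_left h))
  continuous_invFun := by
    simp only [Equiv.invFun_as_coe, funext (gyr_symm_apply_eq g h)]
    exact (hc.continuous_op_left _).comp ((hc.continuous_op_left _).comp
      (hc.continuous_op_left _))

theorem gyr_image_connectedComponent_one (hc : ContinuousGyroOps G) (g h : G) :
    gyr g h '' connectedComponent one = connectedComponent one := by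
  calc gyr g h '' connectedComponent one
      = hc.gyrHomeomorph g h '' connectedComponent one := rfl
    _ = connectedComponent (gyr g h one) :=
      (hc.gyrHomeomorph g h).isQuotientMap.image_connectedComponent
        (by simp [isConnected_singleton]) one
    _ = connectedComponent one := by rw [gyr_apply_one]

theorem op_mem_connectedComponent_one (hc : ContinuousGyroOps G) {a b : G}
    (ha : a ∈ connectedComponent one) (hb : b ∈ connectedComponent one) :
    op a b ∈ connectedComponent one := by
  have hsub := (hc.continuous_op_left a).image_connectedComponent_subset one
  rw [op_one, ← connectedComponent_eq ha] at hsub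
  exact hsub (mem_image_of_mem _ hb)

theorem inv_mem_connectedComponent_one (hc : ContinuousGyroOps G) {a : G}
    (ha : a ∈ connectedComponent one) : inv a ∈ connectedComponent one := by
  have hsub := hc.2.image_connectedComponent_subset one
  rw [inv_one_eq] at hsub
  exact hsub (mem_image_of_mem _ ha)

end ContinuousGyroOps

end Gyrogroup

/-- The connected component of the identity of a topological gyrogroup is an
L-subgyrogroup. -/
theorem stmt4 {G : Type u} [Gyrogroup G] [TopologicalSpace G]
    (hc : ContinuousGyroOps G) :
    IsLSubgyrogroup (connectedComponent (one : G)) :=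
  isLSubgyrogroup_of_gyr_image_eq mem_connectedComponent
    (fun _ ha _ hb => hc.op_mem_connectedComponent_one ha hb)
    (fun _ ha => hc.inv_mem_connectedComponent_one ha)
    (fun g h _ => hc.gyr_image_connectedComponent_one g h)
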